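/- Define for integers $k$ and real $t > 0$ the Gaussian weight $g_t(k) = \frac{1}{\sqrt{2\pi t}} \exp\left( -\frac{(k - t)^2}{2t} \right)$. Then $\lim_{t \to \infty} \sum_{k \in \mathbb{Z}} |g_t(k+1) - g_t(k)| = 0$. -/

import Mathlib

open Filter Real

private lemma tele_hasSum {a : ℕ → ℝ} (hmono : ∀ n, a (n + 1) ≤ a n)
    (hlim : Filter.Tendsto a Filter.atTop (nhds 0)) :
    HasSum (fun n => a n - a (n + 1)) (a 0) := by
  rw [hasSum_iff_tendsto_nat_of_nonneg (fun n => sub_nonneg.2 (hmono n))]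
  have h : (fun n : ℕ => ∑ i ∈ Finset.range n, (a i - a (i + 1))) = fun n => a 0 - a n := by
    funext n; exact Finset.sum_range_sub' a n
  rw [h]
  simpa using tendsto_const_nhds.sub hlim

private lemma gauss_lim {t c : ℝ} (ht : 0 < t) {y : ℕ → ℝ}
    (hy : Filter.Tendsto y Filter.atTop Filter.atTop) :
    Filter.Tendsto (fun n => c * Real.exp (-(y n) / (2 * t))) Filter.atTop (nhds 0) := by
  have h1 : Filter.Tendsto (fun n => -(y n) / (2 * t)) Filter.atTop Filter.atBot := by
    apply Filter.Tendsto.atBot_div_const (by positivity)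
    exact tendsto_neg_atTop_atBot.comp hy
  have h2 : Filter.Tendsto (fun n => Real.exp (-(y n) / (2 * t))) Filter.atTop (nhds 0) :=
    Real.tendsto_exp_atBot.comp h1
  simpa using h2.const_mul c

private lemma sqrt_tendsto_atTop : Filter.Tendsto Real.sqrt Filter.atTop Filter.atTop := by
  apply Filter.tendsto_atTop_atTop.2
  intro b
  refine ⟨b ^ 2, fun a ha => ?_⟩
  calc b ≤ |b| := le_abs_self b
    _ = Real.sqrt (b ^ 2) := (Real.sqrt_sq_eq_abs b).symm
    _ ≤ Real.sqrt a := Real.sqrt_le_sqrt ha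

private lemma key_hasSum (t : ℝ) (ht : 0 < t) :
    ∃ S : ℝ, S ≤ 2 * (Real.sqrt (2 * Real.pi * t))⁻¹ ∧
      HasSum (fun k : ℤ =>
        |(Real.sqrt (2 * Real.pi * t))⁻¹ * Real.exp (-((k : ℝ) + 1 - t) ^ 2 / (2 * t))
          - (Real.sqrt (2 * Real.pi * t))⁻¹ * Real.exp (-((k : ℝ) - t) ^ 2 / (2 * t))|) S := by
  set c : ℝ := (Real.sqrt (2 * Real.pi * t))⁻¹ with hc_def
  have hc : 0 ≤ c := by positivity
  set φ : ℝ → ℝ := fun x => c * Real.exp (-(x - t) ^ 2 / (2 * t)) with hφ_def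
  have hφ_nonneg : ∀ x, 0 ≤ φ x := fun x => by positivity
  have hφ_le : ∀ x, φ x ≤ c := by
    intro x
    have : Real.exp (-(x - t) ^ 2 / (2 * t)) ≤ 1 := by
      rw [Real.exp_le_one_iff]
      apply div_nonpos_of_nonpos_of_nonneg <;> nlinarith [sq_nonneg (x - t)]
    calc φ x ≤ c * 1 := mul_le_mul_of_nonneg_left this hc
      _ = c := mul_one c
  have hdec : ∀ x : ℝ, t - 1/2 ≤ x → φ (x + 1) ≤ φ x := by
    intro x hx
    apply mul_le_mul_of_nonneg_left _ hc
    apply Real.exp_le_exp.2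
    apply div_le_div_of_nonneg_right _ (by positivity)
    nlinarith
  have hinc : ∀ x : ℝ, x ≤ t - 1/2 → φ x ≤ φ (x + 1) := by
    intro x hx
    apply mul_le_mul_of_nonneg_left _ hc
    apply Real.exp_le_exp.2
    apply div_le_div_of_nonneg_right _ (by positivity)
    nlinarith
  set k0 : ℤ := ⌈t - 1/2⌉ with hk0_def
  have hk0 : t - 1/2 ≤ (k0 : ℝ) := Int.le_ceil _
  have hk0' : (k0 : ℝ) < t - 1/2 + 1 := Int.ceil_lt_add_one _
  -- plus side
  set a : ℕ → ℝ := fun n => φ ((k0 : ℝ) + n) with ha_def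
  have ha_mono : ∀ n, a (n + 1) ≤ a n := by
    intro n
    have := hdec ((k0 : ℝ) + n) (by push_cast; linarith [Nat.cast_nonneg (α := ℝ) n])
    simpa [ha_def, add_assoc] using this
  have ha_lim : Filter.Tendsto a Filter.atTop (nhds 0) := by
    have hz : Filter.Tendsto (fun n : ℕ => ((k0 : ℝ) + n - t)) Filter.atTop Filter.atTop := by
      apply Filter.tendsto_atTop_add_const_right
      apply Filter.tendsto_atTop_add_const_left
      exact tendsto_natCast_atTop_atTop
    have hy : Filter.Tendsto (fun n : ℕ => ((k0 : ℝ) + n - t) ^ 2) Filter.atTop Filter.atTop := by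
      have := hz.atTop_mul_atTop₀ hz
      simpa [sq] using this
    have := gauss_lim ht hy (c := c)
    exact this
  have hpos : HasSum (fun n : ℕ => a n - a (n + 1)) (φ (k0 : ℝ)) := by
    have := tele_hasSum ha_mono ha_lim
    simpa [ha_def] using this
  -- minus side
  set b : ℕ → ℝ := fun n => φ ((k0 : ℝ) - n) with hb_def
  have hb_mono : ∀ n, b (n + 1) ≤ b n := by
    intro n
    have h1 : ((k0 : ℝ) - (n + 1)) ≤ t - 1/2 := by
      push_cast
      have : (0 : ℝ) ≤ n := Nat.cast_nonneg n
      linarith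
    have := hinc ((k0 : ℝ) - ((n : ℝ) + 1)) h1
    have e1 : ((k0 : ℝ) - ((n : ℝ) + 1)) + 1 = (k0 : ℝ) - n := by ring
    rw [e1] at this
    simpa [hb_def] using this
  have hb_lim : Filter.Tendsto b Filter.atTop (nhds 0) := by
    have hz : Filter.Tendsto (fun n : ℕ => ((n : ℝ) + (t - k0))) Filter.atTop Filter.atTop := by
      apply Filter.tendsto_atTop_add_const_right
      exact tendsto_natCast_atTop_atTop
    have hy : Filter.Tendsto (fun n : ℕ => ((k0 : ℝ) - n - t) ^ 2) Filter.atTop Filter.atTop := by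
      have h2 := hz.atTop_mul_atTop₀ hz
      have e2 : (fun n : ℕ => ((k0 : ℝ) - n - t) ^ 2)
          = fun n : ℕ => ((n : ℝ) + (t - k0)) * ((n : ℝ) + (t - k0)) := by
        funext n; ring
      rw [e2]; exact h2
    have := gauss_lim ht hy (c := c)
    exact this
  have hneg : HasSum (fun n : ℕ => b n - b (n + 1)) (φ (k0 : ℝ)) := by
    have := tele_hasSum hb_mono hb_lim
    simpa [hb_def] using this
  -- merge
  have hint : HasSum (Int.rec (fun n : ℕ => a n - a (n + 1)) (fun n : ℕ => b n - b (n + 1)) :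
      ℤ → ℝ) (φ (k0 : ℝ) + φ (k0 : ℝ)) := hpos.int_rec hneg
  set D : ℤ → ℝ := fun k => |φ ((k : ℝ) + 1) - φ (k : ℝ)| with hD_def
  have heq : (Int.rec (fun n : ℕ => a n - a (n + 1)) (fun n : ℕ => b n - b (n + 1)) : ℤ → ℝ)
      = fun j : ℤ => D (j + k0) := by
    funext j
    cases j with
    | ofNat n =>
      have hx : t - 1/2 ≤ ((k0 : ℝ) + n) := by linarith [Nat.cast_nonneg (α := ℝ) n]
      have hle := hdec _ hx
      have e : ((Int.ofNat n + k0 : ℤ) : ℝ) = (k0 : ℝ) + n := by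
        push_cast [Int.ofNat_eq_natCast]; ring
      show a n - a (n + 1) = |φ (((Int.ofNat n + k0 : ℤ) : ℝ) + 1) - φ ((Int.ofNat n + k0 : ℤ) : ℝ)|
      rw [e, abs_of_nonpos (by linarith), ha_def]
      push_cast
      ring_nf
    | negSucc n =>
      have hx : ((k0 : ℝ) - ((n : ℝ) + 1)) ≤ t - 1/2 := by
        have : (0 : ℝ) ≤ n := Nat.cast_nonneg n
        linarith
      have hle := hinc _ hx
      have e1 : ((k0 : ℝ) - ((n : ℝ) + 1)) + 1 = (k0 : ℝ) - n := by ring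
      rw [e1] at hle
      have e : ((Int.negSucc n + k0 : ℤ) : ℝ) = (k0 : ℝ) - ((n : ℝ) + 1) := by
        push_cast [Int.negSucc_eq]; ring
      show b n - b (n + 1) = |φ (((Int.negSucc n + k0 : ℤ) : ℝ) + 1) - φ ((Int.negSucc n + k0 : ℤ) : ℝ)|
      rw [e, e1, abs_of_nonneg (by linarith), hb_def]
      push_cast
      ring_nf
  rw [heq] at hint
  have hfin : HasSum D (φ (k0 : ℝ) + φ (k0 : ℝ)) := by
    have : (fun j : ℤ => D (j + k0)) = D ∘ (Equiv.addRight k0) := rfl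
    rw [this] at hint
    exact (Equiv.hasSum_iff (Equiv.addRight k0)).1 hint
  refine ⟨φ (k0 : ℝ) + φ (k0 : ℝ), by have := hφ_le (k0 : ℝ); linarith, ?_⟩
  exact hfin

/-- For the Gaussian weight `g_t(k) = exp(-(k-t)²/(2t))/√(2πt)` on `ℤ`,
the total variation of the shift tends to zero: `∑_{k ∈ ℤ} |g_t(k+1) - g_t(k)| → 0`
as `t → ∞`. -/
theorem stmt8 :
    Filter.Tendsto
      (fun t : ℝ => ∑' k : ℤ,
        |(Real.sqrt (2 * Real.pi * t))⁻¹ * Real.exp (-((k : ℝ) + 1 - t) ^ 2 / (2 * t))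
          - (Real.sqrt (2 * Real.pi * t))⁻¹ * Real.exp (-((k : ℝ) - t) ^ 2 / (2 * t))|)
      Filter.atTop (nhds 0) := by
  have hupper : Filter.Tendsto (fun t : ℝ => 2 * (Real.sqrt (2 * Real.pi * t))⁻¹)
      Filter.atTop (nhds 0) := by
    have h1 : Filter.Tendsto (fun t : ℝ => 2 * Real.pi * t) Filter.atTop Filter.atTop := by
      apply Filter.Tendsto.const_mul_atTop (by positivity)
      exact Filter.tendsto_id
    have h2 : Filter.Tendsto (fun t : ℝ => Real.sqrt (2 * Real.pi * t)) Filter.atTop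
        Filter.atTop := sqrt_tendsto_atTop.comp h1
    have h3 : Filter.Tendsto (fun t : ℝ => (Real.sqrt (2 * Real.pi * t))⁻¹) Filter.atTop
        (nhds 0) := tendsto_inv_atTop_zero.comp h2
    simpa using h3.const_mul 2
  apply tendsto_of_tendsto_of_tendsto_of_le_of_le' tendsto_const_nhds hupper
  · filter_upwards with t
    exact tsum_nonneg (fun k => abs_nonneg _)
  · filter_upwards [Filter.eventually_gt_atTop (0 : ℝ)] with t ht
    obtain ⟨S, hS, hsum⟩ := key_hasSum t ht
    rw [hsum.tsum_eq]
    exact hS
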